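/- arXiv:2408.03915 — 5 statements merged into one kernel-verified Lean document; each statement's English description precedes it below -/
import Mathlib

section
/- Let f, π : {0,1}^n → {0,1} and x ∈ {0,1}^n. A subset S ⊆ {1,…,n} is an aligned sufficient reason for f at x with respect to π if and only if S intersects every aligned contrastive reason for f at x with respect to π (hitting-set duality between sufficient and contrastive reasons). -/
def compSuf {n : ℕ} (S : Finset (Fin n)) (x z : Fin n → Bool) : Fin n → Bool :=
  fun i => if i ∈ S then x i else z i

def compCon {n : ℕ} (T : Finset (Fin n)) (x z : Fin n → Bool) : Fin n → Bool :=
  fun i => if i ∈ T then z i else x i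

/-- Hitting-set duality between aligned sufficient and aligned contrastive reasons. -/
theorem stmt3 {n : ℕ} (f π : (Fin n → Bool) → Bool) (x : Fin n → Bool)
    (S : Finset (Fin n)) :
    (∀ z : Fin n → Bool, π (compSuf S x z) = true → f (compSuf S x z) = f x) ↔
      (∀ T : Finset (Fin n),
        (∃ z : Fin n → Bool, π (compCon T x z) = true ∧ f (compCon T x z) ≠ f x) →
          (S ∩ T).Nonempty) := by
  constructor
  · rintro hS T ⟨z, hπ, hf⟩
    by_contra hempty
    rw [Finset.not_nonempty_iff_eq_empty, ← Finset.disjoint_iff_inter_eq_empty] at hempty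
    have key : compSuf S x (compCon T x z) = compCon T x z := by
      funext i
      simp only [compSuf, compCon]
      by_cases hi : i ∈ S
      · have : i ∉ T := Finset.disjoint_left.mp hempty hi
        simp [hi, this]
      · simp [hi]
    rw [← key] at hπ hf
    exact hf (hS _ hπ)
  · intro h z hπ
    by_contra hf
    have key : compCon Sᶜ x z = compSuf S x z := by
      funext i
      simp only [compSuf, compCon, Finset.mem_compl]
      by_cases hi : i ∈ S <;> simp [hi]
    have := h Sᶜ ⟨z, by rw [key]; exact ⟨hπ, hf⟩⟩
    simp at this
end

section
/- For any f, π : {0,1}^n → Bool and x ∈ {0,1}^n, there exists g : {0,1}^n → Bool (namely g = f ∨ ¬π if f(x) = true, and g = f ∧ π if f(x) = false) such that for all y ∈ {0,1}^n: (f(y) ≠ f(x) ∧ π(y) = true) ↔ g(y) ≠ g(x). Consequently, for every S ⊆ {1,…,n}, S is an aligned sufficient reason for f at x with respect to π if and only if S is a plain sufficient reason for g at x. -/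
theorem stmt7 {n : ℕ} (f π : (Fin n → Bool) → Bool) (x : Fin n → Bool) :
    ∃ g : (Fin n → Bool) → Bool,
      (g = if f x = true then (fun y => f y || !π y) else (fun y => f y && π y)) ∧
      (∀ y : Fin n → Bool, (f y ≠ f x ∧ π y = true) ↔ g y ≠ g x) ∧
      (∀ S : Finset (Fin n),
        ((∀ z : Fin n → Bool, π (compSuf S x z) = true → f (compSuf S x z) = f x) ↔
          (∀ z : Fin n → Bool, g (compSuf S x z) = g x))) := by
  refine ⟨_, rfl, ?_⟩
  have key : ∀ y : Fin n → Bool, (f y ≠ f x ∧ π y = true) ↔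
      ((if f x = true then (fun y => f y || !π y) else (fun y => f y && π y)) y ≠
       (if f x = true then (fun y => f y || !π y) else (fun y => f y && π y)) x) := by
    intro y
    rcases Bool.eq_false_or_eq_true (f x) with hx | hx <;> simp [hx] <;>
      rcases Bool.eq_false_or_eq_true (f y) with hy | hy <;>
      rcases Bool.eq_false_or_eq_true (π y) with hp | hp <;> simp [hy, hp]
  refine ⟨key, fun S => ?_⟩
  constructor
  · intro h z
    by_contra hne
    have := (key (compSuf S x z)).mpr hne
    exact absurd (h z this.2) this.1
  · intro h z hpz
    by_contra hne
    exact absurd ((key (compSuf S x z)).mp ⟨hne, hpz⟩) (by simp [h z])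
end

section
/- Let f, π : {0,1}^n → Bool, x ∈ {0,1}^n, and define g = f ∨ ¬π if f(x) = true and g = f ∧ π otherwise. Then for every S ⊆ {1,…,n}, the aligned completion count |{z ∈ {0,1}^{S̄-部分} : π(x_S; z_{S̄}) = true and f(x_S; z_{S̄}) ≠ f(x)}| equals the plain completion count |{z : g(x_S; z_{S̄}) ≠ g(x)}|, where completions z range over assignments to the coordinates in S̄. -/
/-- Completions of `x` outside `S` are identified with full vectors agreeing
with `x` on `S`. -/
theorem stmt8 {n : ℕ} (f π : (Fin n → Bool) → Bool) (x : Fin n → Bool)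
    (g : (Fin n → Bool) → Bool)
    (hg : g = if f x = true then (fun y => f y || !π y) else (fun y => f y && π y))
    (S : Finset (Fin n)) :
    Nat.card {z : Fin n → Bool //
        (∀ i ∈ S, z i = x i) ∧ π z = true ∧ f z ≠ f x} =
      Nat.card {z : Fin n → Bool // (∀ i ∈ S, z i = x i) ∧ g z ≠ g x} := by
  apply Nat.card_congr
  apply Equiv.subtypeEquivRight
  intro z
  subst hg
  cases hf : f x <;> cases hfz : f z <;> cases hπ : π z <;>
    cases hπx : π x <;> simp [hf, hfz, hπ, hπx]
end

section
/- Let f be the perceptron f(y) = (⟨w, y⟩ + b > 0) with w ∈ ℚ^n, b ∈ ℚ, let x ∈ {0,1}^n, and let S ⊆ {1,…,n}. Write A = Σ_{i∉S} wᵢ xᵢ, M = Σ_{i∈S} max(wᵢ, 0), and m = Σ_{i∈S} min(wᵢ, 0). Then S is a contrastive reason for f at x (i.e., there exists z ∈ {0,1}^n with f(x_{S̄}; z_S) ≠ f(x)) if and only if A + M + b > 0 and A + m + b ≤ 0. -/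
/-- Characterization of contrastive subsets for a perceptron. -/
theorem stmt14 {n : ℕ} (w : Fin n → ℚ) (b : ℚ) (x : Fin n → Bool)
    (S : Finset (Fin n)) (f : (Fin n → Bool) → Bool)
    (hf : ∀ y, f y = decide ((∑ i, w i * (if y i then 1 else 0)) + b > 0))
    (A M m : ℚ)
    (hA : A = ∑ i ∈ Sᶜ, w i * (if x i then 1 else 0))
    (hM : M = ∑ i ∈ S, max (w i) 0)
    (hm : m = ∑ i ∈ S, min (w i) 0) :
    (∃ z : Fin n → Bool, f (compCon S x z) ≠ f x) ↔
      (A + M + b > 0 ∧ A + m + b ≤ 0) := by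
  have hsplit : ∀ y : Fin n → Bool, (∑ i, w i * (if y i then 1 else 0)) =
      (∑ i ∈ S, w i * (if y i then 1 else 0)) +
        (∑ i ∈ Sᶜ, w i * (if y i then 1 else 0)) :=
    fun y => (Finset.sum_add_sum_compl S _).symm
  have hcompS : ∀ z : Fin n → Bool,
      (∑ i ∈ S, w i * (if compCon S x z i then 1 else 0)) =
        ∑ i ∈ S, w i * (if z i then 1 else 0) := by
    intro z; refine Finset.sum_congr rfl fun i hi => ?_; simp [compCon, hi]
  have hcompC : ∀ z : Fin n → Bool,
      (∑ i ∈ Sᶜ, w i * (if compCon S x z i then 1 else 0)) =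
        ∑ i ∈ Sᶜ, w i * (if x i then 1 else 0) := by
    intro z; refine Finset.sum_congr rfl fun i hi => ?_
    simp [compCon, Finset.mem_compl.mp hi]
  have hub : ∀ z : Fin n → Bool,
      (∑ i ∈ S, w i * (if z i then 1 else 0)) ≤ M := by
    intro z; rw [hM]; refine Finset.sum_le_sum fun i _ => ?_
    by_cases h : z i <;> simp [h, le_max_left, le_max_right]
  have hlb : ∀ z : Fin n → Bool,
      m ≤ ∑ i ∈ S, w i * (if z i then 1 else 0) := by
    intro z; rw [hm]; refine Finset.sum_le_sum fun i _ => ?_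
    by_cases h : z i <;> simp [h, min_le_left, min_le_right]
  have hmaxz : (∑ i ∈ S, w i * (if (fun i => decide (0 < w i)) i then 1 else 0)) = M := by
    rw [hM]; refine Finset.sum_congr rfl fun i _ => ?_
    by_cases h : 0 < w i
    · simp [h, max_eq_left h.le]
    · simp [h, max_eq_right (le_of_not_gt h)]
  have hminz : (∑ i ∈ S, w i * (if (fun i => decide (w i < 0)) i then 1 else 0)) = m := by
    rw [hm]; refine Finset.sum_congr rfl fun i _ => ?_
    by_cases h : w i < 0
    · simp [h, min_eq_left h.le]
    · simp [h, min_eq_right (le_of_not_gt h)]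
  constructor
  · rintro ⟨z, hz⟩
    rw [hf, hf, hsplit (compCon S x z), hcompS, hcompC, hsplit x, ← hA] at hz
    simp only [ne_eq, decide_eq_decide] at hz
    by_cases h1 : (∑ i ∈ S, w i * (if z i then 1 else 0)) + A + b > 0 <;>
      by_cases h2 : (∑ i ∈ S, w i * (if x i then 1 else 0)) + A + b > 0
    · exact absurd (iff_of_true h1 h2) hz
    · exact ⟨by linarith [hub z], by linarith [hlb x]⟩
    · exact ⟨by linarith [hub x], by linarith [hlb z]⟩
    · exact absurd (iff_of_false h1 h2) hz
  · rintro ⟨h1, h2⟩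
    by_cases hx : f x = true
    · refine ⟨fun i => decide (w i < 0), ?_⟩
      rw [hx, hf, hsplit, hcompS, hcompC, ← hA, hminz]
      simp only [ne_eq, decide_eq_true_eq]
      intro h; linarith
    · refine ⟨fun i => decide (0 < w i), ?_⟩
      rw [Bool.not_eq_true] at hx
      rw [hx, hf, hsplit, hcompS, hcompC, ← hA, hmaxz]
      simp only [ne_eq, decide_eq_false_iff_not, not_not]
      linarith
end

section
/- Let f, π : {0,1}^n → Bool, x ∈ {0,1}^n, and suppose a class of Boolean functions C contains f and π and is closed under pointwise conjunction (∧) and pointwise implication (→). Then C contains a function g with the property that for every S ⊆ {1,…,n} and every z ∈ {0,1}^n: (f(x_{S̄}; z_S) ≠ f(x) ∧ π(x_{S̄}; z_S) = true) if and only if g(x_{S̄}; z_S) ≠ g(x). -/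
theorem stmt18 {n : ℕ} (C : Set ((Fin n → Bool) → Bool))
    (f π : (Fin n → Bool) → Bool) (x : Fin n → Bool)
    (hf : f ∈ C) (hπ : π ∈ C)
    (hand : ∀ f₁ f₂, f₁ ∈ C → f₂ ∈ C → (fun y => f₁ y && f₂ y) ∈ C)
    (himp : ∀ f₁ f₂, f₁ ∈ C → f₂ ∈ C → (fun y => !f₁ y || f₂ y) ∈ C) :
    ∃ g ∈ C, ∀ (S : Finset (Fin n)) (z : Fin n → Bool),
      (f (compCon S x z) ≠ f x ∧ π (compCon S x z) = true) ↔
        g (compCon S x z) ≠ g x := by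
  by_cases hx : f x = true
  · refine ⟨fun y => !π y || f y, himp π f hπ hf, ?_⟩
    intro S z
    cases hfy : f (compCon S x z) <;> cases hpy : π (compCon S x z) <;>
      simp [hx, hfy, hpy]
  · have hx' : f x = false := by simpa using hx
    refine ⟨fun y => f y && π y, hand f π hf hπ, ?_⟩
    intro S z
    cases hfy : f (compCon S x z) <;> cases hpy : π (compCon S x z) <;>
      simp [hx', hfy, hpy]
end
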